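/- arXiv:1110.1224 — 3 statements merged into one kernel-verified Lean document; each statement's English description precedes it below -/
import Mathlib

section
/- Let G be a group and let d, a₁, a₂, a₃, a₄, x₁, x₂, x₃, x₄ ∈ G satisfy d² a₁ a₂ a₃ a₄ = x₁ x₂ x₃ x₄, with d, a₁, a₂, a₃, a₄, x₄ pairwise commuting. Suppose moreover that there exist f, g ∈ G with x₁ a₂⁻¹ x₂ a₁⁻¹ = [x₁ a₂⁻¹, f], and x₃ᵏ a₄⁻ᵏ x₄ᵏ a₃⁻ᵏ = [x₃ᵏ a₄⁻ᵏ, g] for all k ≥ 1. Then for every k ≥ 1, the element d^{2k} is a product of k + 1 commutators in G. -/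
open scoped commutatorElement

private lemma conj_prod' {G : Type*} [Group G] (w y : G) (n : ℕ) :
    ((List.range n).map (fun j => y^j * w * (y^j)⁻¹)).prod = (w*y)^n * (y^n)⁻¹ := by
  induction n with
  | zero => simp
  | succ n ih =>
    rw [List.range_succ, List.map_append, List.prod_append, ih]
    simp only [List.map_cons, List.map_nil, List.prod_cons, List.prod_nil, mul_one]
    rw [pow_succ, pow_succ]
    group

private lemma conj_comm' {G : Type*} [Group G] (t u v : G) :
    ⁅t*u*t⁻¹, t*v*t⁻¹⁆ = t*⁅u,v⁆*t⁻¹ := by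
  rw [commutatorElement_def, commutatorElement_def]; group

theorem stmt_4 {G : Type*} [Group G] (d a₁ a₂ a₃ a₄ x₁ x₂ x₃ x₄ f g : G)
    (hrel : d ^ 2 * a₁ * a₂ * a₃ * a₄ = x₁ * x₂ * x₃ * x₄)
    (hcomm : [d, a₁, a₂, a₃, a₄, x₄].Pairwise Commute)
    (hf : x₁ * a₂⁻¹ * x₂ * a₁⁻¹ = ⁅x₁ * a₂⁻¹, f⁆)
    (hg : ∀ k : ℕ, 1 ≤ k →
      x₃ ^ k * (a₄ ^ k)⁻¹ * x₄ ^ k * (a₃ ^ k)⁻¹ = ⁅x₃ ^ k * (a₄ ^ k)⁻¹, g⁆)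
    (k : ℕ) (hk : 1 ≤ k) :
    ∃ L : List (G × G), L.length = k + 1 ∧
      d ^ (2 * k) = (L.map (fun p => ⁅p.1, p.2⁆)).prod := by
  simp only [List.pairwise_cons, List.mem_cons, List.not_mem_nil, or_false, List.Pairwise.nil,
    and_true, List.mem_singleton, forall_eq_or_imp, forall_eq] at hcomm
  obtain ⟨⟨hda1, hda2, hda3, hda4, hdx4⟩, ⟨ha12, ha13, ha14, ha1x4⟩,
    ⟨ha23, ha24, ha2x4⟩, ⟨ha34, ha3x4⟩, ⟨ha4x4, -⟩⟩ := hcomm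
  set c : G := a₂ * a₁ with hc
  set y : G := c * x₃ * c⁻¹ with hy
  set w : G := ⁅x₁ * f, a₂ * x₁⁻¹⁆ with hwdef
  -- w = x₁ x₂ a₁⁻¹ a₂⁻¹
  have hfa : f * (a₂ * x₁⁻¹) * f⁻¹ = x₂ * a₁⁻¹ := by
    have h : x₂ * a₁⁻¹ = (x₁ * a₂⁻¹)⁻¹ * (x₁ * a₂⁻¹ * x₂ * a₁⁻¹) := by group
    rw [hf, commutatorElement_def] at h
    rw [h]; group
  have hw : w = x₁ * (x₂ * a₁⁻¹) * a₂⁻¹ := by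
    rw [hwdef, commutatorElement_def, ← hfa]; group
  -- x₃ in terms of the rest
  have hx3 : x₃ = x₂⁻¹ * (x₁⁻¹ * ((d ^ 2 * a₁ * a₂ * a₃ * a₄) * x₄⁻¹)) := by
    rw [hrel]; group
  -- w * y = d^2 * (a₃ * (a₄ * x₄⁻¹))
  have hM2 : Commute a₂ (a₃ * (a₄ * x₄⁻¹)) := ha23.mul_right (ha24.mul_right ha2x4.inv_right)
  have hM1 : Commute a₁ (a₃ * (a₄ * x₄⁻¹)) := ha13.mul_right (ha14.mul_right ha1x4.inv_right)
  have hcM : Commute c (a₃ * (a₄ * x₄⁻¹)) := hM2.mul_left hM1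
  have hca : c * (a₃ * (a₄ * x₄⁻¹)) * c⁻¹ = a₃ * (a₄ * x₄⁻¹) := by
    rw [hcM.eq]; group
  have hwy : w * y = d ^ 2 * (a₃ * (a₄ * x₄⁻¹)) := by
    calc w * y = d ^ 2 * (a₁ * a₂) * (a₃ * (a₄ * x₄⁻¹)) * c⁻¹ := by
          rw [hw, hy, hx3, hc]; group
      _ = d ^ 2 * (c * (a₃ * (a₄ * x₄⁻¹)) * c⁻¹) := by rw [ha12.eq, ← hc]; group
      _ = d ^ 2 * (a₃ * (a₄ * x₄⁻¹)) := by rw [hca]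
  have hyk : y ^ k = c * x₃ ^ k * c⁻¹ := conj_pow ..
  -- the witness list
  refine ⟨((List.range k).map (fun j =>
      (y^j * (x₁ * f) * (y^j)⁻¹, y^j * (a₂ * x₁⁻¹) * (y^j)⁻¹))) ++
      [(c * (x₃ ^ k * (a₄ ^ k)⁻¹) * c⁻¹, c * g * c⁻¹)], by simp, ?_⟩
  rw [List.map_append, List.prod_append, List.map_map]
  have hmap : ((List.range k).map ((fun p : G × G => ⁅p.1, p.2⁆) ∘ (fun j =>
      (y^j * (x₁ * f) * (y^j)⁻¹, y^j * (a₂ * x₁⁻¹) * (y^j)⁻¹)))).prod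
      = (w * y) ^ k * (y ^ k)⁻¹ := by
    rw [← conj_prod' w y k]
    congr 1
    refine List.map_congr_left (fun j _ => ?_)
    simp only [Function.comp_apply]
    rw [conj_comm', hwdef]
  rw [hmap]
  simp only [List.map_cons, List.map_nil, List.prod_cons, List.prod_nil, mul_one]
  rw [conj_comm', ← hg k hk, hwy, hyk]
  -- abelian endgame
  have hE : (d ^ 2 * (a₃ * (a₄ * x₄⁻¹))) ^ k
      = d ^ (2 * k) * (a₃ ^ k * (a₄ ^ k * (x₄ ^ k)⁻¹)) := by
    rw [((hda3.mul_right (hda4.mul_right hdx4.inv_right)).pow_left 2).mul_pow,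
      (ha34.mul_right ha3x4.inv_right).mul_pow, ha4x4.inv_right.mul_pow,
      inv_pow, ← pow_mul]
  have hN2 : Commute a₂ ((a₄ ^ k)⁻¹ * (x₄ ^ k * (a₃ ^ k)⁻¹)) :=
    (ha24.pow_right k).inv_right.mul_right
      ((ha2x4.pow_right k).mul_right (ha23.pow_right k).inv_right)
  have hN1 : Commute a₁ ((a₄ ^ k)⁻¹ * (x₄ ^ k * (a₃ ^ k)⁻¹)) :=
    (ha14.pow_right k).inv_right.mul_right
      ((ha1x4.pow_right k).mul_right (ha13.pow_right k).inv_right)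
  have hcN : Commute c ((a₄ ^ k)⁻¹ * (x₄ ^ k * (a₃ ^ k)⁻¹)) := hN2.mul_left hN1
  have hcb : c * ((a₄ ^ k)⁻¹ * (x₄ ^ k * (a₃ ^ k)⁻¹)) * c⁻¹
      = (a₄ ^ k)⁻¹ * (x₄ ^ k * (a₃ ^ k)⁻¹) := by
    rw [hcN.eq]; group
  calc d ^ (2 * k)
      = d ^ (2 * k) * (a₃ ^ k * (a₄ ^ k * (x₄ ^ k)⁻¹))
        * ((a₄ ^ k)⁻¹ * (x₄ ^ k * (a₃ ^ k)⁻¹)) := by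
        rw [show a₄ ^ k * (x₄ ^ k)⁻¹ = (x₄ ^ k)⁻¹ * a₄ ^ k from (ha4x4.pow_pow k k).inv_right.eq]
        group
    _ = (d ^ 2 * (a₃ * (a₄ * x₄⁻¹))) ^ k
        * (c * ((a₄ ^ k)⁻¹ * (x₄ ^ k * (a₃ ^ k)⁻¹)) * c⁻¹) := by rw [hE, hcb]
    _ = (d ^ 2 * (a₃ * (a₄ * x₄⁻¹))) ^ k * (c * x₃ ^ k * c⁻¹)⁻¹
        * (c * (x₃ ^ k * (a₄ ^ k)⁻¹ * x₄ ^ k * (a₃ ^ k)⁻¹) * c⁻¹) := by group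
end

section
/- Let G be a group, φ : G → ℝ a homogeneous quasimorphism with defect D_φ > 0, and x ∈ [G,G]. Then scl(x) ≥ |φ(x)| / (2 D_φ). -/
open Filter
open scoped commutatorElement

/-- The commutator length: the minimal number of commutators needed to write `x`
as a product of commutators. -/
noncomputable def cl {G : Type*} [Group G] (x : G) : ℕ :=
  sInf {n : ℕ | ∃ L : List (G × G), L.length = n ∧ x = (L.map fun p => ⁅p.1, p.2⁆).prod}

/-!
A homogeneous quasimorphism is conjugation invariant: `φ (g aⁿ g⁻¹) - φ (aⁿ)` is bounded
by `2 D` but equals `n (φ (g a g⁻¹) - φ a)`. Since `φ b⁻¹ = -φ b`, comparing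
`φ ⁅a, b⁆` with `φ (a b a⁻¹) + φ b⁻¹ = 0` gives `|φ ⁅a, b⁆| ≤ D`, so a product of `k`
commutators has `|φ| ≤ 2 k D`. For `xⁿ` this reads `n |φ x| ≤ 2 D cl (xⁿ)`; divide by `n`
and let `n → ∞`.
-/

lemma eq_zero_of_forall_nat_mul_abs_le {c C : ℝ} (h : ∀ n : ℕ, n * |c| ≤ C) : c = 0 := by
  by_contra hc
  obtain ⟨n, hn⟩ := exists_nat_gt (C / |c|)
  rw [div_lt_iff₀ (abs_pos.2 hc)] at hn
  linarith [h n]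

section Quasimorphism

variable {G : Type*} [Group G] {φ : G → ℝ} {D : ℝ}

lemma map_one_of_homogeneous (hhom : ∀ (x : G) (n : ℤ), φ (x ^ n) = n * φ x) : φ 1 = 0 := by
  simpa using hhom 1 0

lemma map_inv_of_homogeneous (hhom : ∀ (x : G) (n : ℤ), φ (x ^ n) = n * φ x) (a : G) :
    φ a⁻¹ = -φ a := by
  simpa using hhom a (-1)

lemma map_pow_of_homogeneous (hhom : ∀ (x : G) (n : ℤ), φ (x ^ n) = n * φ x) (a : G)
    (n : ℕ) : φ (a ^ n) = n * φ a := by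
  simpa using hhom a n

lemma map_conj_of_homogeneous (hdef : ∀ a b : G, |φ (a * b) - φ a - φ b| ≤ D)
    (hhom : ∀ (x : G) (n : ℤ), φ (x ^ n) = n * φ x) (g a : G) :
    φ (g * a * g⁻¹) = φ a := by
  refine sub_eq_zero.1 (eq_zero_of_forall_nat_mul_abs_le (C := 2 * D) fun n => ?_)
  have hconj : φ (g * a ^ n * g⁻¹) = n * φ (g * a * g⁻¹) := by
    rw [← conj_pow, map_pow_of_homogeneous hhom]
  calc (n : ℝ) * |φ (g * a * g⁻¹) - φ a|
      = |n * (φ (g * a * g⁻¹) - φ a)| := by rw [abs_mul, Nat.abs_cast]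
    _ = |(φ (g * a ^ n * g⁻¹) - φ (g * a ^ n) - φ g⁻¹)
          + (φ (g * a ^ n) - φ g - φ (a ^ n))| := by
        rw [hconj, map_pow_of_homogeneous hhom, map_inv_of_homogeneous hhom]
        congr 1
        ring
    _ ≤ D + D := (abs_add_le _ _).trans (add_le_add (hdef _ _) (hdef _ _))
    _ = 2 * D := by ring

lemma abs_map_commutatorElement_le (hdef : ∀ a b : G, |φ (a * b) - φ a - φ b| ≤ D)
    (hhom : ∀ (x : G) (n : ℤ), φ (x ^ n) = n * φ x) (a b : G) :
    |φ ⁅a, b⁆| ≤ D := by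
  have h := hdef (a * b * a⁻¹) b⁻¹
  rwa [map_conj_of_homogeneous hdef hhom, map_inv_of_homogeneous hhom, sub_neg_eq_add,
    sub_add_cancel, ← commutatorElement_def] at h

lemma abs_map_prod_commutatorElement_le (hdef : ∀ a b : G, |φ (a * b) - φ a - φ b| ≤ D)
    (hhom : ∀ (x : G) (n : ℤ), φ (x ^ n) = n * φ x) (l : List (G × G)) :
    |φ (l.map fun p => ⁅p.1, p.2⁆).prod| ≤ 2 * l.length * D := by
  induction l with
  | nil => simp [map_one_of_homogeneous hhom]
  | cons p l ih =>
    have hD : 0 ≤ D := (abs_nonneg _).trans (hdef 1 1)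
    have hmul := hdef ⁅p.1, p.2⁆ (l.map fun p => ⁅p.1, p.2⁆).prod
    have hp := abs_map_commutatorElement_le hdef hhom p.1 p.2
    simp only [List.map_cons, List.prod_cons, List.length_cons, Nat.cast_succ]
    rw [abs_le] at hmul hp ih ⊢
    constructor <;> linarith

end Quasimorphism

lemma exists_list_commutatorElement_of_mem_commutator {G : Type*} [Group G] {x : G}
    (hx : x ∈ commutator G) : ∃ l : List (G × G), x = (l.map fun p => ⁅p.1, p.2⁆).prod := by
  rw [commutator_eq_closure] at hx
  induction hx using Subgroup.closure_induction with
  | mem z hz =>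
    obtain ⟨a, b, rfl⟩ := hz
    exact ⟨[(a, b)], by simp⟩
  | one => exact ⟨[], rfl⟩
  | mul a b _ _ iha ihb =>
    obtain ⟨la, rfl⟩ := iha
    obtain ⟨lb, rfl⟩ := ihb
    exact ⟨la ++ lb, by simp⟩
  | inv a _ iha =>
    obtain ⟨la, rfl⟩ := iha
    refine ⟨(la.map Prod.swap).reverse, ?_⟩
    simp [List.prod_inv_reverse, List.map_reverse, Function.comp_def, commutatorElement_inv]

lemma exists_list_length_eq_cl {G : Type*} [Group G] {x : G} (hx : x ∈ commutator G) :
    ∃ l : List (G × G), l.length = cl x ∧ x = (l.map fun p => ⁅p.1, p.2⁆).prod := by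
  obtain ⟨l, hl⟩ := exists_list_commutatorElement_of_mem_commutator hx
  exact Nat.sInf_mem (s := {n | ∃ l : List (G × G), l.length = n ∧ x = _})
    ⟨l.length, l, rfl, hl⟩

lemma abs_map_le_two_mul_cl_mul {G : Type*} [Group G] {φ : G → ℝ} {D : ℝ}
    (hdef : ∀ a b : G, |φ (a * b) - φ a - φ b| ≤ D)
    (hhom : ∀ (x : G) (n : ℤ), φ (x ^ n) = n * φ x) {x : G} (hx : x ∈ commutator G) :
    |φ x| ≤ 2 * cl x * D := by
  obtain ⟨l, hlen, rfl⟩ := exists_list_length_eq_cl hx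
  simpa [hlen] using abs_map_prod_commutatorElement_le hdef hhom l

theorem stmt_9_general {G : Type*} [Group G] (φ : G → ℝ) (D : ℝ)
    (hdefect : IsLUB {r : ℝ | ∃ x y : G, r = |φ (x * y) - φ x - φ y|} D)
    (hhom : ∀ (x : G) (n : ℤ), φ (x ^ n) = n * φ x)
    (x : G) (hx : x ∈ commutator G) (L : ℝ)
    (hL : Tendsto (fun n : ℕ => (cl (x ^ n) : ℝ) / n) atTop (nhds L)) :
    |φ x| / (2 * D) ≤ L := by
  have hdef : ∀ a b : G, |φ (a * b) - φ a - φ b| ≤ D := fun a b => hdefect.1 ⟨a, b, rfl⟩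
  have hD : 0 ≤ D := (abs_nonneg _).trans (hdef 1 1)
  refine ge_of_tendsto hL ((eventually_ge_atTop 1).mono fun n hn => ?_)
  have hn : (0 : ℝ) < n := by exact_mod_cast hn
  have hbound := abs_map_le_two_mul_cl_mul hdef hhom ((commutator G).pow_mem hx n)
  rw [map_pow_of_homogeneous hhom, abs_mul, Nat.abs_cast] at hbound
  refine div_le_of_le_mul₀ (by positivity) (by positivity) ?_
  rw [div_mul_eq_mul_div, le_div_iff₀ hn]
  linarith

theorem stmt_9 {G : Type*} [Group G] (φ : G → ℝ) (D : ℝ) (hD : 0 < D)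
    (hdefect : IsLUB {r : ℝ | ∃ x y : G, r = |φ (x * y) - φ x - φ y|} D)
    (hhom : ∀ (x : G) (n : ℤ), φ (x ^ n) = n * φ x)
    (x : G) (hx : x ∈ commutator G) (L : ℝ)
    (hL : Tendsto (fun n : ℕ => (cl (x ^ n) : ℝ) / n) atTop (nhds L)) :
    |φ x| / (2 * D) ≤ L :=
  stmt_9_general φ D hdefect hhom x hx L hL
end

section
/- Let G be a group and φ : G → ℝ a homogeneous quasimorphism with defect D_φ. Suppose d, a₁, a₂, a₃, x₁, x₂, x₃ ∈ G satisfy d a₁ a₂ a₃ = x₁ x₂ x₃, the elements d, a₁, a₂, a₃, x₃ pairwise commute, and all of a₁, a₂, a₃, x₁, x₂, x₃ are conjugate in G to a common element. Then |φ(d)| ≤ D_φ. -/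
/-!
Homogeneity upgrades the defect bound to exact identities: an expression in values of `φ` that
scales by `n` when its arguments are replaced by their `n`-th powers, yet stays uniformly bounded,
vanishes. Hence `φ` is a class function and additive on commuting elements.
Applying this to the relation `d a₁ a₂ a₃ = (x₁ x₂) x₃`, in which `x₃` commutes with the left-hand
side and hence with `x₁ x₂`, gives `φ d + 3 φ z = φ (x₁ x₂) + φ z`, where `z` is the common
conjugate. So `φ d = φ (x₁ x₂) - φ x₁ - φ x₂`, which is at most `D` in absolute value.
-/

lemma eq_zero_of_forall_abs_nat_mul_le {a C : ℝ} (h : ∀ n : ℕ, |n * a| ≤ C) : a = 0 := by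
  by_contra ha
  have hpos : 0 < |a| := abs_pos.mpr ha
  obtain ⟨n, hn⟩ := exists_nat_gt (C / |a|)
  have hle : (n : ℝ) * |a| ≤ C := by simpa [abs_mul] using h n
  exact absurd ((le_div_iff₀ hpos).mpr hle) (not_le.mpr hn)

namespace HomogeneousQuasimorphism

variable {G : Type*} [Group G] {φ : G → ℝ} {D : ℝ}

lemma map_inv (hhom : ∀ (x : G) (n : ℤ), φ (x ^ n) = n * φ x) (g : G) : φ g⁻¹ = -φ g := by
  simpa using hhom g (-1)

lemma abs_map_conj_sub_le (hdefect : ∀ x y : G, |φ (x * y) - φ x - φ y| ≤ D)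
    (hhom : ∀ (x : G) (n : ℤ), φ (x ^ n) = n * φ x) (g x : G) :
    |φ (g * x * g⁻¹) - φ x| ≤ 2 * D := by
  have h₁ := abs_le.mp (hdefect g (x * g⁻¹))
  have h₂ := abs_le.mp (hdefect x g⁻¹)
  rw [← mul_assoc] at h₁
  rw [map_inv hhom] at h₂
  exact abs_le.mpr ⟨by linarith, by linarith⟩

lemma map_conj (hdefect : ∀ x y : G, |φ (x * y) - φ x - φ y| ≤ D)
    (hhom : ∀ (x : G) (n : ℤ), φ (x ^ n) = n * φ x) (g x : G) :
    φ (g * x * g⁻¹) = φ x := by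
  refine sub_eq_zero.mp (eq_zero_of_forall_abs_nat_mul_le (C := 2 * D) fun n => ?_)
  have h := abs_map_conj_sub_le hdefect hhom g (x ^ (n : ℤ))
  rwa [← conj_zpow, hhom, hhom, ← mul_sub, Int.cast_natCast] at h

lemma map_eq_of_isConj (hdefect : ∀ x y : G, |φ (x * y) - φ x - φ y| ≤ D)
    (hhom : ∀ (x : G) (n : ℤ), φ (x ^ n) = n * φ x) {x y : G} (h : IsConj x y) :
    φ x = φ y := by
  obtain ⟨g, rfl⟩ := isConj_iff.mp h
  exact (map_conj hdefect hhom g x).symm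

lemma map_mul_of_commute (hdefect : ∀ x y : G, |φ (x * y) - φ x - φ y| ≤ D)
    (hhom : ∀ (x : G) (n : ℤ), φ (x ^ n) = n * φ x) {x y : G} (h : Commute x y) :
    φ (x * y) = φ x + φ y := by
  suffices φ (x * y) - φ x - φ y = 0 by linarith
  refine eq_zero_of_forall_abs_nat_mul_le (C := D) fun n => ?_
  have hd := hdefect (x ^ (n : ℤ)) (y ^ (n : ℤ))
  rwa [← h.mul_zpow, hhom, hhom, hhom, Int.cast_natCast, ← mul_sub, ← mul_sub] at hd

lemma map_list_prod_of_pairwise_commute (hdefect : ∀ x y : G, |φ (x * y) - φ x - φ y| ≤ D)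
    (hhom : ∀ (x : G) (n : ℤ), φ (x ^ n) = n * φ x) {l : List G} (hl : l.Pairwise Commute) :
    φ l.prod = (l.map φ).sum := by
  induction l with
  | nil => simpa using hhom 1 0
  | cons a l ih =>
    obtain ⟨ha, hl⟩ := List.pairwise_cons.mp hl
    rw [List.prod_cons, map_mul_of_commute hdefect hhom (Commute.list_prod_right l a ha), ih hl,
      List.map_cons, List.sum_cons]

end HomogeneousQuasimorphism

open HomogeneousQuasimorphism in
theorem stmt_10 {G : Type*} [Group G] (φ : G → ℝ) (D : ℝ)
    (hdefect : ∀ x y : G, |φ (x * y) - φ x - φ y| ≤ D)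
    (hhom : ∀ (x : G) (n : ℤ), φ (x ^ n) = n * φ x)
    (d a₁ a₂ a₃ x₁ x₂ x₃ : G)
    (hrel : d * a₁ * a₂ * a₃ = x₁ * x₂ * x₃)
    (hcomm : [d, a₁, a₂, a₃, x₃].Pairwise Commute)
    (hconj : ∃ z : G, ∀ w ∈ [a₁, a₂, a₃, x₁, x₂, x₃], IsConj z w) :
    |φ d| ≤ D := by
  obtain ⟨z, hz⟩ := hconj
  simp only [List.forall_mem_cons, List.not_mem_nil, IsEmpty.forall_iff, implies_true,
    and_true] at hz
  obtain ⟨ha₁, ha₂, ha₃, hx₁, hx₂, hx₃⟩ := hz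
  have hcomm' : ([d, a₁, a₂, a₃] ++ [x₃]).Pairwise Commute := hcomm
  obtain ⟨hlhs_comm, -, hx₃_comm⟩ := List.pairwise_append.mp hcomm'
  have hlhs : φ (d * a₁ * a₂ * a₃) = φ d + φ a₁ + φ a₂ + φ a₃ := by
    simpa [mul_assoc, add_assoc] using map_list_prod_of_pairwise_commute hdefect hhom hlhs_comm
  have hx₃_lhs : Commute (d * a₁ * a₂ * a₃) x₃ := by
    simpa [mul_assoc] using
      Commute.list_prod_left _ x₃ fun a ha => hx₃_comm a ha x₃ (List.mem_singleton_self x₃)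
  have hx₃_x₁x₂ : Commute (x₁ * x₂) x₃ :=
    ((IsRightRegular.all x₃).commute_mul_right_iff.mp (hrel ▸ hx₃_lhs)).symm
  have hrhs := map_mul_of_commute hdefect hhom hx₃_x₁x₂
  have hφ {w : G} (h : IsConj z w) : φ w = φ z := (map_eq_of_isConj hdefect hhom h).symm
  have hd : φ d = φ (x₁ * x₂) - φ x₁ - φ x₂ := by
    rw [hrel, hφ ha₁, hφ ha₂, hφ ha₃] at hlhs
    rw [hφ hx₃] at hrhs
    rw [hφ hx₁, hφ hx₂]
    linarith
  rw [hd]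
  exact hdefect x₁ x₂
end
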